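/- Lebesgue decomposition lemma for invariant measures: Assume E is finite, ℙ is translation invariant and ergodic in the time direction, the random walk is elliptic, ℚ is a probability measure on (Ω,ℱ) invariant for the environment process, and the restrictions of ℚ and ℙ to (Ω, ℱ_{≥0}) are not mutually singular. Then there exists a probability measure ℚ_c on (Ω,ℱ), invariant for the environment process, such that ℚ_c and ℙ are mutually absolutely continuous on (Ω, ℱ_{≥0}). -/

import Mathlib

open MeasureTheory ProbabilityTheory Filter Topology

namespace RWDRE

/-- Space-time sites: `ℤ^d × ℤ` (space, time). -/
abbrev Site (d : ℕ) : Type := (Fin d → ℤ) × ℤ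

/-- Environments: `Ω = E^{ℤ^{d+1}}`. We write `η (x, t)` for `η_t(x)`. -/
abbrev Env (d : ℕ) (E : Type*) : Type _ := Site d → E

variable {d : ℕ} {E : Type*}

/-- The shift `θ_{x,t}`: `(θ_{x,t} η)_s(y) = η_{s+t}(y+x)`. -/
def shift (x : Fin d → ℤ) (t : ℤ) (η : Env d E) : Env d E :=
  fun p => η (p.1 + x, p.2 + t)

section Meas

variable [MeasurableSpace E]

/-- The sub-σ-algebra `ℱ_Λ` generated by the cylinders of `Λ ⊆ ℤ^{d+1}`. -/
def cylSA (Λ : Set (Site d)) : MeasurableSpace (Env d E) :=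
  MeasurableSpace.comap (fun (η : Env d E) (p : Λ) => η ↑p) MeasurableSpace.pi

/-- Elementary conditional probability `ℙ(B|A) = ℙ(B ∩ A)/ℙ(A)` as a real number. -/
noncomputable def condProb {Ω : Type*} [MeasurableSpace Ω] (μ : Measure Ω) (B A : Set Ω) : ℝ :=
  (μ (B ∩ A)).toReal / (μ A).toReal

/-- Translation invariance of the environment law. -/
def IsTranslationInvariant (P : Measure (Env d E)) : Prop :=
  ∀ (x : Fin d → ℤ) (t : ℤ), P.map (shift x t) = P

/-- Ergodicity in the time direction. -/
def IsTimeErgodic (P : Measure (Env d E)) : Prop :=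
  ∀ B : Set (Env d E), MeasurableSet B → shift (0 : Fin d → ℤ) 1 ⁻¹' B = B →
    P B = 0 ∨ P B = 1

/-- The standing assumptions on the jump kernel `α` of the random walk:
nonnegative, normalized, jump range contained in the finite set `𝓡 ∋ o` with
`‖y‖₁ ≤ R` on `𝓡`, and of finite range `R` in its dependence on the environment. -/
structure IsTransition (𝓡 : Finset (Fin d → ℤ)) (R : ℕ)
    (α : Env d E → (Fin d → ℤ) → ℝ) : Prop where
  nonneg : ∀ η y, 0 ≤ α η y
  sum_one : ∀ η, ∑ y ∈ 𝓡, α η y = 1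
  supp : ∀ η y, y ∉ 𝓡 → α η y = 0
  zero_mem : (0 : Fin d → ℤ) ∈ 𝓡
  range_le : ∀ y ∈ 𝓡, (∑ i, |y i|) ≤ (R : ℤ)
  finRange : ∀ η σ z, (∀ y : Fin d → ℤ, (∀ i, |y i| ≤ (R : ℤ)) → η (y, 0) = σ (y, 0)) →
    α η z = α σ z

/-- Backwards trajectories `Γ_k`: `γ` is indexed by `j ∈ {0,…,k}`, where index `j`
corresponds to time `j - k ∈ {-k,…,0}`; `γ` ends at the origin and has increments in `𝓡`. -/
def IsPath (𝓡 : Finset (Fin d → ℤ)) (k : ℕ) (γ : Fin (k + 1) → (Fin d → ℤ)) : Prop :=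
  γ (Fin.last k) = 0 ∧ ∀ i : Fin k, γ i.succ - γ i.castSucc ∈ 𝓡

/-- Extension of a path to all of `ℕ` (constant after `k`). -/
def pad {k : ℕ} (γ : Fin (k + 1) → (Fin d → ℤ)) : ℕ → (Fin d → ℤ) :=
  fun j => γ ⟨min j k, Nat.lt_succ_of_le (Nat.min_le_right j k)⟩

/-- The event `A_{-k}^{-m}(γ,σ)`: the environment agrees with `σ` on the
`R`-neighbourhood of the path at the times `-k,…,-m` (index `j ↔` time `j - k`). -/
def pathEvent (R : ℕ) (k m : ℕ) (γ : Fin (k + 1) → (Fin d → ℤ)) (σ : Env d E) :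
    Set (Env d E) :=
  {η | ∀ j : ℕ, j ≤ k - m → ∀ y : Fin d → ℤ, (∀ i, |y i| ≤ (R : ℤ)) →
    η (y + pad γ j, (j : ℤ) - (k : ℤ)) = σ (y + pad γ j, (j : ℤ) - (k : ℤ))}

/-- `𝒜_{-k}^{-m}(γ)`: all possible (positive-probability) observations along `γ`. -/
def obsEvents (R : ℕ) (k m : ℕ) (γ : Fin (k + 1) → (Fin d → ℤ))
    (P : Measure (Env d E)) : Set (Set (Env d E)) :=
  {A | ∃ σ : Env d E, A = pathEvent R k m γ σ ∧ 0 < P A}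

/-- `𝒜_{-∞}^{-m}`. -/
def obsFrom (𝓡 : Finset (Fin d → ℤ)) (R : ℕ) (P : Measure (Env d E)) (m : ℕ) :
    Set (Set (Env d E)) :=
  {A | ∃ k, m ≤ k ∧ ∃ γ : Fin (k + 1) → (Fin d → ℤ), IsPath 𝓡 k γ ∧ A ∈ obsEvents R k m γ P}

/-- `𝒜_{-∞} = 𝒜_{-∞}^{-1}`. -/
abbrev obsAll (𝓡 : Finset (Fin d → ℤ)) (R : ℕ) (P : Measure (Env d E)) :
    Set (Set (Env d E)) := obsFrom 𝓡 R P 1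

/-- The cone `𝒞(j) = {(x,t) : t ≥ j, ‖x‖₁ ≤ (R+1)t}`. -/
def coneSet (d : ℕ) (R : ℕ) (j : ℕ) : Set (Site d) :=
  {p | (j : ℤ) ≤ p.2 ∧ (∑ i, |p.1 i|) ≤ ((R : ℤ) + 1) * p.2}

/-- The forward half-space `ℍ = ℤ^d × ℤ_{≥0}`. -/
def halfSpace (d : ℕ) : Set (Site d) := {p | 0 ≤ p.2}

/-- `Λ(l) = {z ∈ ℍ : ‖z‖₁ ≥ l}`. -/
def lamSet (d : ℕ) (l : ℕ) : Set (Site d) :=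
  {p | 0 ≤ p.2 ∧ (l : ℤ) ≤ (∑ i, |p.1 i|) + p.2}

/-- One step of the environment process applied to a measure: `ℚ ↦ ℚK`, where
`K(η,·) = Σ_{y∈𝓡} α(η,y) δ_{θ_{y,1}η}`. -/
noncomputable def stepEP (𝓡 : Finset (Fin d → ℤ)) (α : Env d E → (Fin d → ℤ) → ℝ)
    (Q : Measure (Env d E)) : Measure (Env d E) :=
  ∑ y ∈ 𝓡, (Q.withDensity fun η => ENNReal.ofReal (α η y)).map (shift y 1)

/-- `ℚ` is invariant for the environment process. -/
def IsInvariantEP (𝓡 : Finset (Fin d → ℤ)) (α : Env d E → (Fin d → ℤ) → ℝ)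
    (Q : Measure (Env d E)) : Prop :=
  stepEP 𝓡 α Q = Q

/-- `ℚ` is ergodic for the environment process: every harmonic indicator is a.s. constant. -/
def IsErgodicEP (𝓡 : Finset (Fin d → ℤ)) (α : Env d E → (Fin d → ℤ) → ℝ)
    (Q : Measure (Env d E)) : Prop :=
  ∀ B : Set (Env d E), MeasurableSet B →
    (∀ᵐ η ∂Q, ∑ y ∈ 𝓡, α η y * Set.indicator B (fun _ => (1 : ℝ)) (shift y 1 η)
        = Set.indicator B (fun _ => (1 : ℝ)) η) →
    Q B = 0 ∨ Q B = 1

/-- `P` is the annealed (joint) law of the environment (with law `ℙ`) and the walk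
`(X_t)_{t≥0}` with `X_0 = o` and quenched transitions
`P_η(X_{t+1} = y + z | X_t = y) = α(θ_{y,t}η, z)`, characterized through its
finite-dimensional distributions. -/
def IsAnnealedLaw (α : Env d E → (Fin d → ℤ) → ℝ) (P : Measure (Env d E))
    (PP : Measure (Env d E × (ℕ → (Fin d → ℤ)))) : Prop :=
  ∀ (k : ℕ) (x : ℕ → (Fin d → ℤ)) (B : Set (Env d E)), MeasurableSet B →
    PP {p | p.1 ∈ B ∧ ∀ i ≤ k, p.2 i = x i} =
      if x 0 = 0 then
        ∫⁻ η in B, ∏ i ∈ Finset.range k,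
          ENNReal.ofReal (α (shift (x i) (i : ℤ) η) (x (i + 1) - x i)) ∂P
      else 0

end Meas

end RWDRE
/-!
Decompose `ℚ` on `ℱ_{≥0}` as `ℚ|_s + ℚ|_{sᶜ}` with `ℚ|_s ≪ ℙ` and `ℙ(sᶜ) = 0`. By translation
invariance of `ℙ`, one step `K` of the environment process preserves absolute continuity with
respect to `ℙ` on `ℱ_{≥0}`; comparing masses in `Kℚ = ℚ` then forces `K(ℚ|_s) = ℚ|_s` on
`ℱ_{≥0}`. As `K` turns agreement on `ℱ_{≥-j}` into agreement on `ℱ_{≥-(j+1)}`, the iterates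
`Kⁿ(ℚ|_s)` agree on `ℱ_{≥-j}` for `n ≥ j`; being dominated by `ℚ`, they have a projective
limit (built from a bounded martingale of densities), which is invariant and `≪ ℙ` on
`ℱ_{≥0}`. Finally, ellipticity lets the walk stay put, so the support of the density of this
limit with respect to `ℙ` is forward invariant under `θ_{o,1}` and has full measure by
ergodicity.
-/

open MeasureTheory ProbabilityTheory Filter Topology

namespace MeasureTheory

open Set

variable {α : Type*}

def AbsolutelyContinuousOn (m : MeasurableSpace α) {m0 : MeasurableSpace α} (μ ν : Measure α) :
    Prop :=
  ∀ s, MeasurableSet[m] s → ν s = 0 → μ s = 0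

lemma absolutelyContinuousOn_iff_trim {m m0 : MeasurableSpace α} (hm : m ≤ m0) {μ ν : Measure α} :
    AbsolutelyContinuousOn m μ ν ↔ μ.trim hm ≪ ν.trim hm := by
  refine ⟨fun h => Measure.AbsolutelyContinuous.mk fun s hs hν => ?_, fun h s hs hν => ?_⟩
  · rw [trim_measurableSet_eq hm hs] at hν ⊢
    exact h s hs hν
  · rw [← trim_measurableSet_eq hm hs] at hν ⊢
    exact h hν

theorem exists_absolutelyContinuousOn_restrict {m m0 : MeasurableSpace α} (hm : m ≤ m0)
    (μ ν : Measure α) [IsFiniteMeasure μ] [IsFiniteMeasure ν] :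
    ∃ s, MeasurableSet[m] s ∧ ν sᶜ = 0 ∧ AbsolutelyContinuousOn m (μ.restrict s) ν := by
  obtain ⟨s, hs, hsing, hνs⟩ := Measure.mutuallySingular_singularPart (μ.trim hm) (ν.trim hm)
  refine ⟨s, hs, by rwa [trim_measurableSet_eq hm hs.compl] at hνs, fun A hA hνA => ?_⟩
  have hνA' : ν.trim hm A = 0 := by rwa [trim_measurableSet_eq hm hA]
  rw [Measure.restrict_apply (hm A hA), ← trim_measurableSet_eq hm (hA.inter hs),
    Measure.haveLebesgueDecomposition_add (μ.trim hm) (ν.trim hm), Measure.add_apply,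
    measure_mono_null inter_subset_right hsing, zero_add]
  exact measure_mono_null inter_subset_left (withDensity_absolutelyContinuous _ _ hνA')

lemma lintegral_eq_of_eq_on {m m0 : MeasurableSpace α} (hm : m ≤ m0) {μ ν : Measure α}
    (h : ∀ s, MeasurableSet[m] s → μ s = ν s) {f : α → ENNReal} (hf : Measurable[m] f) :
    ∫⁻ x, f x ∂μ = ∫⁻ x, f x ∂ν := by
  have htrim : μ.trim hm = ν.trim hm := @Measure.ext _ m _ _ fun s hs => by
    rw [trim_measurableSet_eq hm hs, trim_measurableSet_eq hm hs, h s hs]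
  rw [← lintegral_trim hm hf, htrim, lintegral_trim hm hf]

theorem Filtration.ext_of_iSup_eq {m0 : MeasurableSpace α} {𝔽 : Filtration ℕ m0}
    (h𝔽 : ⨆ n, 𝔽 n = m0) {μ ν : Measure α} [IsFiniteMeasure μ]
    (hμν : ∀ n s, MeasurableSet[𝔽 n] s → μ s = ν s) : μ = ν := by
  refine ext_of_generate_finite _
    ((MeasurableSpace.generateFrom_iUnion_measurableSet (fun n => 𝔽 n)).trans h𝔽).symm
    (isPiSystem_iUnion_of_monotone _ (fun n => @MeasurableSpace.isPiSystem_measurableSet _ (𝔽 n))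
      fun _ _ hij _ hs => 𝔽.mono hij _ hs) (fun s hs => ?_) (hμν 0 _ .univ)
  obtain ⟨n, hn⟩ := mem_iUnion.mp hs
  exact hμν n s hn

section ProjectiveLimit

variable {m0 : MeasurableSpace α} {Q : Measure α} [IsFiniteMeasure Q]
  {𝔽 : Filtration ℕ m0} {ν : ℕ → Measure α}

noncomputable def condDensity (Q : Measure α) (𝔽 : Filtration ℕ m0) (ν : ℕ → Measure α)
    (n : ℕ) : α → ℝ :=
  Q[fun x => ((ν n).rnDeriv Q x).toReal | 𝔽 n]

lemma setIntegral_condDensity (hle : ∀ n, ν n ≤ Q)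
    (hcons : ∀ j n, j ≤ n → ∀ A, MeasurableSet[𝔽 j] A → ν n A = ν j A)
    {j n : ℕ} (hjn : j ≤ n) {A : Set α} (hA : MeasurableSet[𝔽 j] A) :
    ∫ x in A, condDensity Q 𝔽 ν n x ∂Q = (ν j A).toReal := by
  have := isFiniteMeasure_of_le Q (hle n)
  rw [condDensity, setIntegral_condExp (𝔽.le n) Measure.integrable_toReal_rnDeriv
      (𝔽.mono hjn A hA),
    Measure.setIntegral_toReal_rnDeriv (Measure.absolutelyContinuous_of_le (hle n)),
    measureReal_def, hcons j n hjn A hA]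

lemma condDensity_mem_Icc (hle : ∀ n, ν n ≤ Q) (n : ℕ) :
    ∀ᵐ x ∂Q, condDensity Q 𝔽 ν n x ∈ Icc (0 : ℝ) 1 := by
  have := isFiniteMeasure_of_le Q (hle n)
  have hle_one : (fun x => ((ν n).rnDeriv Q x).toReal) ≤ᵐ[Q] fun _ => (1 : ℝ) := by
    filter_upwards [Measure.rnDeriv_le_one_of_le (hle n)] with x hx
    exact ENNReal.toReal_le_of_le_ofReal zero_le_one (by simpa using hx)
  have h1 := condExp_mono (m := 𝔽 n) Measure.integrable_toReal_rnDeriv (integrable_const 1) hle_one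
  rw [condExp_const (𝔽.le n)] at h1
  filter_upwards [h1, condExp_nonneg (m := 𝔽 n) (ae_of_all Q fun x => ENNReal.toReal_nonneg)]
    with x h1x h0x
  exact ⟨h0x, h1x⟩

lemma martingale_condDensity (hle : ∀ n, ν n ≤ Q)
    (hcons : ∀ j n, j ≤ n → ∀ A, MeasurableSet[𝔽 j] A → ν n A = ν j A) :
    Martingale (condDensity Q 𝔽 ν) 𝔽 Q := by
  refine ⟨fun n => stronglyMeasurable_condExp, fun i j hij => ?_⟩
  refine (ae_eq_condExp_of_forall_setIntegral_eq (𝔽.le i) integrable_condExp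
    (fun A _ _ => integrable_condExp.integrableOn) (fun A hA _ => ?_)
    stronglyMeasurable_condExp.aestronglyMeasurable).symm
  exact (setIntegral_condDensity hle hcons le_rfl hA).trans
    (setIntegral_condDensity hle hcons hij hA).symm

theorem exists_measure_eq_on_filtration (hle : ∀ n, ν n ≤ Q)
    (hcons : ∀ j n, j ≤ n → ∀ A, MeasurableSet[𝔽 j] A → ν n A = ν j A) :
    ∃ μ : Measure α, ∀ j A, MeasurableSet[𝔽 j] A → μ A = ν j A := by
  set M := condDensity Q 𝔽 ν
  have hM := fun n => condDensity_mem_Icc (𝔽 := 𝔽) hle n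
  have hMm : ∀ n, AEStronglyMeasurable (M n) Q := fun n =>
    (stronglyMeasurable_condExp.mono (𝔽.le n)).aestronglyMeasurable
  have hbdd : ∀ n, eLpNorm (M n) 1 Q ≤ (Q univ).toNNReal := fun n => by
    refine (eLpNorm_le_of_ae_bound (C := 1) ?_).trans (by simp)
    filter_upwards [hM n] with x hx
    rw [Real.norm_eq_abs, abs_of_nonneg hx.1]
    exact hx.2
  set g := 𝔽.limitProcess M Q
  have hmart := martingale_condDensity hle hcons
  have hconv := hmart.submartingale.ae_tendsto_limitProcess hbdd
  have hg_int : Integrable g Q :=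
    (Filtration.memLp_limitProcess_of_eLpNorm_bdd hMm hbdd).integrable le_rfl
  have hg_nonneg : 0 ≤ᵐ[Q] g := by
    filter_upwards [hconv, ae_all_iff.mpr hM] with x hx hMx
    exact ge_of_tendsto' hx fun n => (hMx n).1
  refine ⟨Q.withDensity fun x => ENNReal.ofReal (g x), fun j A hA => ?_⟩
  have hlim : Tendsto (fun n => ∫ x in A, M n x ∂Q) atTop (𝓝 (∫ x in A, g x ∂Q)) := by
    refine tendsto_integral_of_dominated_convergence (fun _ => 1) (fun n => (hMm n).restrict)
      (integrable_const 1) (fun n => ae_restrict_of_ae ?_) (ae_restrict_of_ae hconv)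
    filter_upwards [hM n] with x hx
    rw [Real.norm_eq_abs, abs_of_nonneg hx.1]
    exact hx.2
  have hconst : Tendsto (fun n => ∫ x in A, M n x ∂Q) atTop (𝓝 (ν j A).toReal) :=
    tendsto_const_nhds.congr' <| (eventually_ge_atTop j).mono fun n hjn =>
      (setIntegral_condDensity hle hcons hjn hA).symm
  rw [withDensity_apply _ (𝔽.le j A hA), ← ofReal_integral_eq_lintegral_ofReal hg_int.integrableOn
    (ae_restrict_of_ae hg_nonneg), tendsto_nhds_unique hlim hconst,
    ENNReal.ofReal_toReal ((hle j A).trans_lt (measure_lt_top Q A)).ne]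

end ProjectiveLimit

end MeasureTheory

section Ergodic

open Set

variable {α : Type*}

theorem Ergodic.trim {m m0 : MeasurableSpace α} {T : α → α} {μ : Measure α} (hT : Ergodic T μ)
    (hm : m ≤ m0) (hTm : Measurable[m, m] T) : Ergodic T (μ.trim hm) where
  measurable := hTm
  map_eq := @Measure.ext _ m _ _ fun s hs => by
    rw [Measure.map_apply hTm hs, trim_measurableSet_eq hm hs, trim_measurableSet_eq hm (hTm hs),
      hT.measure_preimage (hm s hs).nullMeasurableSet]
  aeconst_set s hs hinv := by
    have h := hT.aeconst_set (hm s hs) hinv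
    rw [eventuallyConst_set'] at h ⊢
    simpa only [ae_eq_empty, ae_eq_univ, trim_measurableSet_eq hm hs,
      trim_measurableSet_eq hm hs.compl] using h

/-- The support of `dν/dμ` is almost forward invariant, hence full by ergodicity. -/
theorem Ergodic.absolutelyContinuous_of_map {m0 : MeasurableSpace α} {T : α → α} {μ ν : Measure α}
    [IsFiniteMeasure μ] [IsFiniteMeasure ν] (hT : Ergodic T μ) (hνμ : ν ≪ μ) (hν : ν ≠ 0)
    (hmap : ν.map T ≪ ν) : μ ≪ ν := by
  set W := {x | ν.rnDeriv μ x ≠ 0}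
  have hWm : MeasurableSet W := Measure.measurable_rnDeriv ν μ (measurableSet_singleton 0).compl
  have hnull : ∀ s, ν s = 0 ↔ μ (W ∩ s) = 0 := fun s => by
    rw [← Measure.withDensity_rnDeriv_eq ν μ hνμ,
      withDensity_apply_eq_zero (Measure.measurable_rnDeriv ν μ)]
  have hWc : ν Wᶜ = 0 := by rw [hnull, inter_compl_self, measure_empty]
  have hinv : W ≤ᵐ[μ] T ⁻¹' W := by
    have h := hmap hWc
    rwa [Measure.map_apply hT.measurable hWm.compl, hnull, preimage_compl, ← sdiff_eq,
      ← ae_le_set] at h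
  rcases hT.ae_empty_or_univ_of_ae_le_preimage hWm.nullMeasurableSet hinv with h | h
  · refine absurd (Measure.measure_univ_eq_zero.mp ?_) hν
    rw [hnull, inter_univ, measure_congr h, measure_empty]
  · refine Measure.AbsolutelyContinuous.mk fun s _ hs => ?_
    rwa [hnull, measure_congr (h.inter (ae_eq_refl s)), univ_inter] at hs

end Ergodic

namespace RWDRE

section

open Set

variable {d : ℕ} {E : Type*} [MeasurableSpace E]

section Cylinders

lemma measurable_eval_cylSA {Λ : Set (Site d)} {p : Site d} (hp : p ∈ Λ) :
    Measurable[cylSA (E := E) Λ] fun η : Env d E => η p := fun s hs =>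
  ⟨(fun f : Λ → E => f ⟨p, hp⟩) ⁻¹' s, measurable_pi_apply (⟨p, hp⟩ : Λ) hs, rfl⟩

lemma cylSA_le_pi (Λ : Set (Site d)) : cylSA (E := E) Λ ≤ MeasurableSpace.pi :=
  measurable_iff_comap_le.mp (measurable_pi_lambda _ fun _ => measurable_pi_apply _)

lemma cylSA_mono {Λ Λ' : Set (Site d)} (h : Λ ⊆ Λ') : cylSA (E := E) Λ ≤ cylSA Λ' := by
  rintro _ ⟨t, ht, rfl⟩
  exact ⟨(fun f : Λ' → E => fun p : Λ => f ⟨p.1, h p.2⟩) ⁻¹' t,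
    (measurable_pi_lambda _ fun _ => measurable_pi_apply _) ht, rfl⟩

lemma measurable_shift (y : Fin d → ℤ) (t : ℤ) : Measurable (shift (E := E) y t) :=
  measurable_pi_lambda _ fun _ => measurable_pi_apply _

lemma measurable_shift_cylSA {Λ Λ' : Set (Site d)} (y : Fin d → ℤ) (t : ℤ)
    (h : MapsTo (fun p : Site d => (p.1 + y, p.2 + t)) Λ Λ') :
    Measurable[cylSA Λ', cylSA Λ] (shift (E := E) y t) := by
  rintro _ ⟨u, hu, rfl⟩
  let := cylSA (E := E) Λ'
  exact (measurable_pi_lambda _ fun p : Λ => measurable_eval_cylSA (h p.2)) hu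

def box (d R : ℕ) : Set (Site d) := (univ.pi fun _ => Icc (-(R : ℤ)) R) ×ˢ {0}

lemma finite_box (d R : ℕ) : (box d R).Finite :=
  (Set.Finite.pi fun _ => finite_Icc _ _).prod (finite_singleton 0)

variable [Finite E] [MeasurableSingletonClass E] {𝓡 : Finset (Fin d → ℤ)} {R : ℕ}
  {α : Env d E → (Fin d → ℤ) → ℝ}

/-- A transition kernel of range `R` factors through the restriction to the finite box. -/
lemma IsTransition.measurable_cylSA (hα : IsTransition 𝓡 R α) (y : Fin d → ℤ)
    {Λ : Set (Site d)} (hΛ : box d R ⊆ Λ) :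
    Measurable[cylSA Λ] fun η : Env d E => α η y := by
  classical
  let := cylSA (E := E) Λ
  rcases isEmpty_or_nonempty E with hE | ⟨⟨e⟩⟩
  · have : IsEmpty (Env d E) := ⟨fun η => hE.false (η 0)⟩
    exact Subsingleton.measurable
  have : Finite (box d R) := (finite_box d R).to_subtype
  let extend : (box d R → E) → Env d E := fun σ p => if h : p ∈ box d R then σ ⟨p, h⟩ else e
  have hfac : (fun η => α η y) = (fun σ => α (extend σ) y) ∘ fun η (p : box d R) => η p :=
    funext fun η => hα.finRange _ _ y fun z hz => by
      have hz' : ((z, 0) : Site d) ∈ box d R := ⟨fun i _ => abs_le.mp (hz i), rfl⟩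
      simp only [extend, dif_pos hz']
  rw [hfac]
  exact (measurable_of_finite _).comp
    (measurable_pi_lambda _ fun p => measurable_eval_cylSA (hΛ p.2))

lemma IsTransition.measurable (hα : IsTransition 𝓡 R α) (y : Fin d → ℤ) :
    Measurable fun η : Env d E => α η y :=
  (hα.measurable_cylSA y subset_rfl).mono (cylSA_le_pi _) le_rfl

end Cylinders

def halfSpaceFrom (d j : ℕ) : Set (Site d) := {p | -(j : ℤ) ≤ p.2}

lemma halfSpaceFrom_zero : halfSpaceFrom d 0 = halfSpace d := by
  ext p
  simp [halfSpace, halfSpaceFrom]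

lemma halfSpaceFrom_mono : Monotone (halfSpaceFrom d) := fun _ _ h p hp => by
  simp only [halfSpaceFrom, mem_ofPred_eq] at hp ⊢
  omega

lemma box_subset_halfSpaceFrom (d R j : ℕ) : box d R ⊆ halfSpaceFrom d j := fun p hp => by
  rw [halfSpaceFrom, mem_ofPred_eq, show p.2 = 0 from hp.2]
  omega

lemma mapsTo_shift_halfSpaceFrom (y : Fin d → ℤ) (j : ℕ) :
    MapsTo (fun p : Site d => (p.1 + y, p.2 + 1)) (halfSpaceFrom d (j + 1)) (halfSpaceFrom d j) :=
  fun p (hp : -((j + 1 : ℕ) : ℤ) ≤ p.2) => show -(j : ℤ) ≤ p.2 + 1 by omega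

lemma mapsTo_shift_halfSpace (y : Fin d → ℤ) :
    MapsTo (fun p : Site d => (p.1 + y, p.2 + 1)) (halfSpace d) (halfSpace d) :=
  fun p (hp : 0 ≤ p.2) => show 0 ≤ p.2 + 1 by omega

def timeFiltration (d : ℕ) (E : Type*) [MeasurableSpace E] :
    Filtration ℕ (MeasurableSpace.pi : MeasurableSpace (Env d E)) where
  seq j := cylSA (halfSpaceFrom d j)
  mono' _ _ h := cylSA_mono (halfSpaceFrom_mono h)
  le' _ := cylSA_le_pi _

lemma iSup_timeFiltration : ⨆ j, timeFiltration d E j = MeasurableSpace.pi := by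
  refine le_antisymm (iSup_le (timeFiltration d E).le) (iSup_le fun p => ?_)
  refine (Measurable.comap_le ?_).trans (le_iSup _ p.2.natAbs)
  exact measurable_eval_cylSA (show -(p.2.natAbs : ℤ) ≤ p.2 by omega)

lemma IsTranslationInvariant.measure_preimage {P : Measure (Env d E)}
    (hP : IsTranslationInvariant P) (x : Fin d → ℤ) (t : ℤ) {A : Set (Env d E)}
    (hA : MeasurableSet A) : P (shift x t ⁻¹' A) = P A := by
  rw [← Measure.map_apply (measurable_shift x t) hA, hP]

lemma ergodic_shift_time {P : Measure (Env d E)} [IsProbabilityMeasure P]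
    (htrans : IsTranslationInvariant P) (herg : IsTimeErgodic P) :
    Ergodic (shift (0 : Fin d → ℤ) 1) P where
  measurable := measurable_shift 0 1
  map_eq := htrans 0 1
  aeconst_set s hs hinv := by
    rw [eventuallyConst_set']
    rcases herg s hs hinv with h | h
    · exact Or.inl (ae_eq_empty.mpr h)
    · exact Or.inr (ae_eq_univ.mpr ((prob_compl_eq_zero_iff hs).mpr h))

section StepEP

variable {𝓡 : Finset (Fin d → ℤ)} {α : Env d E → (Fin d → ℤ) → ℝ}

lemma stepEP_apply (μ : Measure (Env d E)) {s : Set (Env d E)} (hs : MeasurableSet s) :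
    stepEP 𝓡 α μ s = ∑ y ∈ 𝓡, ∫⁻ η in shift y 1 ⁻¹' s, ENNReal.ofReal (α η y) ∂μ := by
  rw [stepEP, Measure.finsetSum_apply]
  refine Finset.sum_congr rfl fun y _ => ?_
  rw [Measure.map_apply (measurable_shift y 1) hs, withDensity_apply _ (measurable_shift y 1 hs)]

lemma stepEP_smul (c : ENNReal) (μ : Measure (Env d E)) :
    stepEP 𝓡 α (c • μ) = c • stepEP 𝓡 α μ := by
  simp only [stepEP, withDensity_smul_measure, Measure.map_smul, Finset.smul_sum]

lemma stepEP_mono {μ ν : Measure (Env d E)} (h : μ ≤ ν) : stepEP 𝓡 α μ ≤ stepEP 𝓡 α ν :=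
  Measure.le_iff.mpr fun s hs => by
    rw [stepEP_apply μ hs, stepEP_apply ν hs]
    exact Finset.sum_le_sum fun y _ => lintegral_mono' (Measure.restrict_mono subset_rfl h) le_rfl

lemma absolutelyContinuousOn_stepEP {P μ : Measure (Env d E)} (htrans : IsTranslationInvariant P)
    (h : AbsolutelyContinuousOn (cylSA (halfSpace d)) μ P) :
    AbsolutelyContinuousOn (cylSA (halfSpace d)) (stepEP 𝓡 α μ) P := fun A hA hPA => by
  rw [stepEP_apply μ (cylSA_le_pi _ A hA)]
  refine Finset.sum_eq_zero fun y _ => setLIntegral_measure_zero _ _ (h _ ?_ ?_)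
  · exact measurable_shift_cylSA y 1 (mapsTo_shift_halfSpace y) hA
  · rwa [htrans.measure_preimage y 1 (cylSA_le_pi _ A hA)]

variable [Finite E] [MeasurableSingletonClass E] {R : ℕ}

lemma stepEP_univ (hα : IsTransition 𝓡 R α) (μ : Measure (Env d E)) :
    stepEP 𝓡 α μ univ = μ univ := by
  have hsum : ∀ η, ∑ y ∈ 𝓡, ENNReal.ofReal (α η y) = 1 := fun η => by
    rw [← ENNReal.ofReal_sum_of_nonneg fun y _ => hα.nonneg η y, hα.sum_one η, ENNReal.ofReal_one]
  simp only [stepEP_apply μ MeasurableSet.univ, preimage_univ, Measure.restrict_univ]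
  rw [← lintegral_finsetSum _ fun y _ => (hα.measurable y).ennreal_ofReal]
  simp only [hsum, lintegral_one]

lemma isFiniteMeasure_stepEP (hα : IsTransition 𝓡 R α) (μ : Measure (Env d E))
    [IsFiniteMeasure μ] : IsFiniteMeasure (stepEP 𝓡 α μ) :=
  ⟨by rw [stepEP_univ hα]; exact measure_lt_top μ univ⟩

lemma stepEP_eq_on (hα : IsTransition 𝓡 R α) {μ ν : Measure (Env d E)} {j : ℕ}
    (h : ∀ A, MeasurableSet[cylSA (halfSpaceFrom d j)] A → μ A = ν A) {A : Set (Env d E)}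
    (hA : MeasurableSet[cylSA (halfSpaceFrom d (j + 1))] A) :
    stepEP 𝓡 α μ A = stepEP 𝓡 α ν A := by
  have hA' := cylSA_le_pi _ A hA
  rw [stepEP_apply μ hA', stepEP_apply ν hA']
  refine Finset.sum_congr rfl fun y _ => ?_
  have hpre : MeasurableSet[cylSA (halfSpaceFrom d j)] (shift y 1 ⁻¹' A) :=
    measurable_shift_cylSA y 1 (mapsTo_shift_halfSpaceFrom y j) hA
  rw [← lintegral_indicator (cylSA_le_pi _ _ hpre), ← lintegral_indicator (cylSA_le_pi _ _ hpre)]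
  exact lintegral_eq_of_eq_on (cylSA_le_pi _) h
    ((hα.measurable_cylSA y (box_subset_halfSpaceFrom d R j)).ennreal_ofReal.indicator hpre)

lemma stepEP_iterate_eq_on (hα : IsTransition 𝓡 R α) {μ : Measure (Env d E)}
    (h : ∀ A, MeasurableSet[cylSA (halfSpace d)] A → stepEP 𝓡 α μ A = μ A) {j n : ℕ}
    (hjn : j ≤ n) {A : Set (Env d E)} (hA : MeasurableSet[cylSA (halfSpaceFrom d j)] A) :
    (stepEP 𝓡 α)^[n] μ A = (stepEP 𝓡 α)^[j] μ A := by
  have hsucc : ∀ j, ∀ A, MeasurableSet[cylSA (halfSpaceFrom d j)] A →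
      (stepEP 𝓡 α)^[j + 1] μ A = (stepEP 𝓡 α)^[j] μ A := by
    intro j
    induction j with
    | zero =>
      intro A hA
      rw [halfSpaceFrom_zero] at hA
      exact h A hA
    | succ j ih =>
      intro A hA
      rw [Function.iterate_succ_apply' _ (j + 1)]
      exact (stepEP_eq_on hα ih hA).trans (by rw [Function.iterate_succ_apply'])
  induction n, hjn using Nat.le_induction with
  | base => rfl
  | succ n hjn ih => rw [hsucc n A (cylSA_mono (halfSpaceFrom_mono hjn) _ hA), ih]

lemma stepEP_restrict_eq_on_halfSpace (hα : IsTransition 𝓡 R α) {P Q : Measure (Env d E)}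
    [IsFiniteMeasure Q] (htrans : IsTranslationInvariant P) (hQ : IsInvariantEP 𝓡 α Q)
    {s : Set (Env d E)} (hs : MeasurableSet[cylSA (halfSpace d)] s) (hPs : P sᶜ = 0)
    (hac : AbsolutelyContinuousOn (cylSA (halfSpace d)) (Q.restrict s) P) {A : Set (Env d E)}
    (hA : MeasurableSet[cylSA (halfSpace d)] A) :
    stepEP 𝓡 α (Q.restrict s) A = Q.restrict s A := by
  have hm := cylSA_le_pi (E := E) (halfSpace d)
  have := isFiniteMeasure_stepEP hα (Q.restrict s)
  have hKs : stepEP 𝓡 α (Q.restrict s) sᶜ = 0 :=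
    absolutelyContinuousOn_stepEP htrans hac _ hs.compl hPs
  have hle : (stepEP 𝓡 α (Q.restrict s)).trim hm ≤ (Q.restrict s).trim hm :=
    Measure.le_iff.mpr fun B hB => by
      rw [trim_measurableSet_eq hm hB, trim_measurableSet_eq hm hB,
        Measure.restrict_apply (hm B hB), ← measure_inter_conull hKs]
      calc stepEP 𝓡 α (Q.restrict s) (B ∩ s) ≤ stepEP 𝓡 α Q (B ∩ s) :=
            stepEP_mono Measure.restrict_le_self _
        _ = Q (B ∩ s) := by rw [hQ]
  have huniv : (stepEP 𝓡 α (Q.restrict s)).trim hm univ = (Q.restrict s).trim hm univ := by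
    rw [trim_measurableSet_eq hm MeasurableSet.univ, trim_measurableSet_eq hm MeasurableSet.univ,
      stepEP_univ hα]
  rw [← trim_measurableSet_eq hm hA, Measure.eq_of_le_of_measure_univ_eq hle huniv,
    trim_measurableSet_eq hm hA]

theorem exists_isInvariantEP_eq_on_halfSpace (hα : IsTransition 𝓡 R α)
    {Q μ : Measure (Env d E)} [IsFiniteMeasure Q] (hQ : IsInvariantEP 𝓡 α Q) (hμQ : μ ≤ Q)
    (hμ : ∀ A, MeasurableSet[cylSA (halfSpace d)] A → stepEP 𝓡 α μ A = μ A) :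
    ∃ ν : Measure (Env d E), IsFiniteMeasure ν ∧ IsInvariantEP 𝓡 α ν ∧
      ∀ A, MeasurableSet[cylSA (halfSpace d)] A → ν A = μ A := by
  have hle : ∀ n, (stepEP 𝓡 α)^[n] μ ≤ Q := by
    intro n
    induction n with
    | zero => exact hμQ
    | succ n ih =>
      rw [Function.iterate_succ_apply']
      exact (stepEP_mono ih).trans hQ.le
  obtain ⟨ν, hν⟩ := exists_measure_eq_on_filtration (𝔽 := timeFiltration d E) hle
    fun j n hjn A hA => stepEP_iterate_eq_on hα hμ hjn hA
  have hν0 : ∀ A, MeasurableSet[cylSA (halfSpace d)] A → ν A = μ A := fun A hA =>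
    hν 0 A (by rw [← halfSpaceFrom_zero] at hA; exact hA)
  have : IsFiniteMeasure ν :=
    ⟨by rw [hν0 univ MeasurableSet.univ]; exact (hμQ univ).trans_lt (measure_lt_top Q univ)⟩
  have := isFiniteMeasure_stepEP hα ν
  refine ⟨ν, inferInstance, Filtration.ext_of_iSup_eq iSup_timeFiltration fun j A hA => ?_, hν0⟩
  calc stepEP 𝓡 α ν A = stepEP 𝓡 α ((stepEP 𝓡 α)^[j] μ) A :=
        stepEP_eq_on hα (hν j) ((timeFiltration d E).mono j.le_succ A hA)
    _ = (stepEP 𝓡 α)^[j + 1] μ A := by rw [Function.iterate_succ_apply']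
    _ = (stepEP 𝓡 α)^[j] μ A := stepEP_iterate_eq_on hα hμ j.le_succ hA
    _ = ν A := (hν j A hA).symm

/-- Only the `y = 0` term of `Kμ` is needed: ellipticity makes its density positive. -/
lemma IsInvariantEP.measure_preimage_shift_eq_zero (hα : IsTransition 𝓡 R α)
    (hell : ∀ η : Env d E, ∀ y ∈ 𝓡, 0 < α η y) {μ : Measure (Env d E)}
    (hμ : IsInvariantEP 𝓡 α μ) {A : Set (Env d E)} (hA : MeasurableSet A) (h0 : μ A = 0) :
    μ (shift (0 : Fin d → ℤ) 1 ⁻¹' A) = 0 := by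
  have hstay : ∫⁻ η in shift 0 1 ⁻¹' A, ENNReal.ofReal (α η 0) ∂μ = 0 := by
    have h := stepEP_apply (𝓡 := 𝓡) (α := α) μ hA
    rw [hμ, h0] at h
    exact Finset.sum_eq_zero_iff.mp h.symm 0 hα.zero_mem
  rw [setLIntegral_eq_zero_iff (measurable_shift 0 1 hA) (hα.measurable 0).ennreal_ofReal] at hstay
  exact measure_eq_zero_iff_ae_notMem.mpr (hstay.mono fun η hη hmem =>
    (ENNReal.ofReal_pos.mpr (hell η 0 hα.zero_mem)).ne' (hη hmem))

theorem IsInvariantEP.absolutelyContinuousOn_halfSpace (hα : IsTransition 𝓡 R α)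
    {P ν : Measure (Env d E)} [IsProbabilityMeasure P] [IsFiniteMeasure ν]
    (htrans : IsTranslationInvariant P) (herg : IsTimeErgodic P)
    (hell : ∀ η : Env d E, ∀ y ∈ 𝓡, 0 < α η y) (hν : IsInvariantEP 𝓡 α ν) (hν0 : ν ≠ 0)
    (hνP : AbsolutelyContinuousOn (cylSA (halfSpace d)) ν P) :
    AbsolutelyContinuousOn (cylSA (halfSpace d)) P ν := by
  have hm := cylSA_le_pi (E := E) (halfSpace d)
  have hθ : Measurable[cylSA (halfSpace d), cylSA (halfSpace d)] (shift (E := E) 0 1) :=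
    measurable_shift_cylSA 0 1 (mapsTo_shift_halfSpace 0)
  rw [absolutelyContinuousOn_iff_trim hm] at hνP ⊢
  refine ((ergodic_shift_time htrans herg).trim hm hθ).absolutelyContinuous_of_map hνP ?_ ?_
  · rwa [Ne, ← Measure.measure_univ_eq_zero, trim_measurableSet_eq hm MeasurableSet.univ,
      Measure.measure_univ_eq_zero]
  · refine Measure.AbsolutelyContinuous.mk fun A hA h0 => ?_
    rw [trim_measurableSet_eq hm hA] at h0
    rw [Measure.map_apply hθ hA, trim_measurableSet_eq hm (hθ hA)]
    exact hν.measure_preimage_shift_eq_zero hα hell (hm A hA) h0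

end StepEP

end

/-- Lemma 4.2, Lebesgue decomposition lemma. If `ℙ` is translation
invariant and ergodic in the time direction, the walk is elliptic, `ℚ` is invariant for
the environment process and the restrictions of `ℚ` and `ℙ` to `(Ω, ℱ_{≥0})` are not
mutually singular, then there is a probability measure `ℚ_c`, invariant for the
environment process, which is mutually absolutely continuous with `ℙ` on `(Ω, ℱ_{≥0})`. -/
theorem lebesgue_decomposition_invariant
    {d : ℕ} {E : Type*} [Finite E] [MeasurableSpace E] [MeasurableSingletonClass E]
    (𝓡 : Finset (Fin d → ℤ)) (R : ℕ) (α : Env d E → (Fin d → ℤ) → ℝ)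
    (hα : IsTransition 𝓡 R α)
    (P : Measure (Env d E)) [IsProbabilityMeasure P]
    (htrans : IsTranslationInvariant P)
    (herg : IsTimeErgodic P)
    (hell : ∀ η : Env d E, ∀ y ∈ 𝓡, 0 < α η y)
    (Q : Measure (Env d E)) [IsProbabilityMeasure Q]
    (hQinv : IsInvariantEP 𝓡 α Q)
    (hns : ¬ ∃ S : Set (Env d E), MeasurableSet[cylSA (halfSpace d)] S ∧
      P S = 0 ∧ Q Sᶜ = 0) :
    ∃ Qc : Measure (Env d E), IsProbabilityMeasure Qc ∧ IsInvariantEP 𝓡 α Qc ∧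
      ∀ B : Set (Env d E), MeasurableSet[cylSA (halfSpace d)] B →
        (P B = 0 ↔ Qc B = 0) := by
  obtain ⟨s, hs, hPs, hac⟩ := exists_absolutelyContinuousOn_restrict (cylSA_le_pi (halfSpace d)) Q P
  have hQs : Q s ≠ 0 := fun h => hns ⟨sᶜ, hs.compl, hPs, by rwa [compl_compl]⟩
  obtain ⟨ν, hνfin, hνinv, hνeq⟩ := exists_isInvariantEP_eq_on_halfSpace hα hQinv
    Measure.restrict_le_self fun _ => stepEP_restrict_eq_on_halfSpace hα htrans hQinv hs hPs hac
  have hνuniv : ν Set.univ = Q s := by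
    rw [hνeq Set.univ MeasurableSet.univ, Measure.restrict_apply_univ]
  have hνP : AbsolutelyContinuousOn (cylSA (halfSpace d)) ν P := fun A hA hPA =>
    (hνeq A hA).trans (hac A hA hPA)
  have hPν := hνinv.absolutelyContinuousOn_halfSpace hα htrans herg hell
    (fun h => hQs (by rw [← hνuniv, h, Measure.coe_zero, Pi.zero_apply])) hνP
  refine ⟨(Q s)⁻¹ • ν, ⟨?_⟩, by rw [IsInvariantEP, stepEP_smul, hνinv], fun B hB => ?_⟩
  · rw [Measure.smul_apply, hνuniv, smul_eq_mul, ENNReal.inv_mul_cancel hQs (measure_ne_top Q s)]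
  · rw [Measure.smul_apply, smul_eq_mul, mul_eq_zero,
      or_iff_right (ENNReal.inv_ne_zero.mpr (measure_ne_top Q s))]
    exact ⟨hνP B hB, hPν B hB⟩

end RWDRE
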